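/- Let k' ≥ 0, M_1 ~ Bin(k', 1/4), and Z ~ Geom(1/2) independent of M_1, and set C'_1 = max(Z + 1 − M_1, 0). Then E[C'_1] = 2(7/8)^{k'} and E[(C'_1)²] = 6(7/8)^{k'}. -/

import Mathlib

/-!
Memorylessness: given `M₁ = m`, the variable `max(Z + 1 - m, 0)` vanishes unless `Z ≥ m`, an event
of probability `2^{-m}` on which `Z - m` is again `Geom(1/2)`. Hence
`E[g(C'₁) | M₁ = m] = 2^{-m} E[g(Z + 1)]` for every `g` with `g 0 = 0`, and averaging over `m` with
the generating function `E[t^{M₁}] = (3/4 + t/4)^{k'}` at `t = 1/2` gives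
`E[g(C'₁)] = (7/8)^{k'} E[g(Z + 1)]`. Finally `E[Z + 1] = 2` and `E[(Z + 1)²] = 6`.
-/

/-- The geometric pmf `Geom(1/2)` on ℕ: `P[Z = z] = 2^{-(z+1)}`. -/
noncomputable def geomHalf (z : ℕ) : ℝ := (1 / 2 : ℝ) ^ (z + 1)

/-- The binomial pmf `Bin(k', 1/4)`. -/
noncomputable def binQuarter (k' j : ℕ) : ℝ :=
  (Nat.choose k' j : ℝ) * (1 / 4) ^ j * (3 / 4) ^ (k' - j)

theorem tsum_comp_succ_tsub_mul_pow {α : Type*} [DivisionSemiring α] [TopologicalSpace α]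
    [IsTopologicalSemiring α] [T2Space α] (r : α) {f : ℕ → α} (hf : f 0 = 0) (m : ℕ) :
    ∑' z, f (z + 1 - m) * r ^ (z + 1) = (∑' n, f n * r ^ n) * r ^ m := by
  have hshift : ∑' z, f (z + 1 - m) * r ^ (z + 1) = ∑' j, f (j + 1) * r ^ (j + m + 1) := by
    refine ((add_left_injective m).tsum_eq (f := fun z => f (z + 1 - m) * r ^ (z + 1))
      fun z hz => ?_).symm.trans ?_
    · have hmz : m ≤ z := by
        by_contra! hzm
        exact hz (by simp [Nat.sub_eq_zero_of_le hzm, hf])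
      exact ⟨z - m, Nat.sub_add_cancel hmz⟩
    · simp only [Nat.add_right_comm _ m 1, Nat.add_sub_cancel]
  have hsucc : ∑' j, f (j + 1) * r ^ (j + 1) = ∑' n, f n * r ^ n :=
    Nat.succ_injective.tsum_eq (f := fun n => f n * r ^ n) fun n hn =>
      (Nat.exists_eq_succ_of_ne_zero (by rintro rfl; simp [hf] at hn)).imp fun _ h => h.symm
  rw [hshift, ← hsucc, ← tsum_mul_right]
  congr 1 with j
  rw [mul_assoc, ← pow_add, Nat.add_right_comm]

theorem tsum_sq_mul_geometric_of_norm_lt_one {𝕜 : Type*} [NormedField 𝕜] [CompleteSpace 𝕜]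
    {r : 𝕜} (hr : ‖r‖ < 1) :
    ∑' n : ℕ, (n : 𝕜) ^ 2 * r ^ n = r * (1 + r) / (1 - r) ^ 3 := by
  have h2 := hasSum_choose_mul_geometric_of_norm_lt_one 2 hr
  have h1 := hasSum_choose_mul_geometric_of_norm_lt_one 1 hr
  have h0 := hasSum_choose_mul_geometric_of_norm_lt_one 0 hr
  have hchoose (n : ℕ) : ((n + 2).choose 2 : 𝕜) * 2 = (n + 2) * (n + 1) := by
    have h : (n + 2).choose 2 * 2 = (n + 2) * (n + 1) := by
      simpa [Nat.mul_comm] using (Nat.add_one_mul_choose_eq (n + 1) 1).symm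
    simpa using congrArg (Nat.cast : ℕ → 𝕜) h
  -- `n² = 2 (n+2 choose 2) - 3 (n+1 choose 1) + (n choose 0)`
  have hsq := ((h2.mul_left 2).sub (h1.mul_left 3)).add h0
  rw [show (fun n : ℕ => 2 * ((n + 2).choose 2 * r ^ n) - 3 * ((n + 1).choose 1 * r ^ n)
      + (n + 0).choose 0 * r ^ n : ℕ → 𝕜) = fun n : ℕ => (n : 𝕜) ^ 2 * r ^ n from
    funext fun n => by
      simp only [Nat.choose_one_right, Nat.add_zero, Nat.choose_zero_right]
      push_cast
      linear_combination r ^ n * hchoose n] at hsq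
  have hr1 : 1 - r ≠ 0 := sub_ne_zero.mpr fun h => by simp [← h] at hr
  rw [hsq.tsum_eq]
  field_simp
  ring

theorem tsum_binQuarter_mul_pow (k : ℕ) (t : ℝ) :
    ∑' m, binQuarter k m * t ^ m = (3 / 4 + t / 4) ^ k := by
  rw [tsum_eq_sum (s := Finset.range (k + 1)) fun m hm => ?_, add_comm (3 / 4 : ℝ), add_pow]
  · refine Finset.sum_congr rfl fun m _ => ?_
    rw [binQuarter, div_eq_mul_one_div t, mul_pow]
    ring
  · rw [binQuarter, Nat.choose_eq_zero_of_lt (by simpa using hm)]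
    simp

theorem tsum_tsum_binQuarter_mul_geomHalf (k : ℕ) {f : ℕ → ℝ} (hf : f 0 = 0) :
    ∑' m, ∑' z, binQuarter k m * geomHalf z * f (z + 1 - m)
      = (∑' n, f n * (1 / 2 : ℝ) ^ n) * (7 / 8 : ℝ) ^ k := by
  have hconditional (m : ℕ) : ∑' z, binQuarter k m * geomHalf z * f (z + 1 - m)
      = (∑' n, f n * (1 / 2 : ℝ) ^ n) * (binQuarter k m * (1 / 2 : ℝ) ^ m) := calc
    _ = binQuarter k m * ∑' z, f (z + 1 - m) * (1 / 2 : ℝ) ^ (z + 1) := by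
      rw [← tsum_mul_left]
      congr 1 with z
      rw [geomHalf]
      ring
    _ = _ := by
      rw [tsum_comp_succ_tsub_mul_pow _ hf]
      ring
  rw [tsum_congr hconditional, tsum_mul_left, tsum_binQuarter_mul_pow]
  norm_num

/-- with `M₁ ~ Bin(k',1/4)` and `Z ~ Geom(1/2)` independent, and
`C'₁ = max(Z + 1 - M₁, 0)`, one has `E[C'₁] = 2(7/8)^{k'}` and `E[(C'₁)²] = 6(7/8)^{k'}`. -/
theorem geom_binomial_max_moments (k' : ℕ) :
    (∑' m : ℕ, ∑' z : ℕ, binQuarter k' m * geomHalf z * ((z + 1 - m : ℕ) : ℝ))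
      = 2 * (7 / 8 : ℝ) ^ k' ∧
    (∑' m : ℕ, ∑' z : ℕ, binQuarter k' m * geomHalf z * ((z + 1 - m : ℕ) : ℝ) ^ 2)
      = 6 * (7 / 8 : ℝ) ^ k' := by
  have hr : ‖(1 / 2 : ℝ)‖ < 1 := by norm_num
  constructor
  · rw [tsum_tsum_binQuarter_mul_geomHalf k' (f := fun n : ℕ => (n : ℝ)) Nat.cast_zero,
      tsum_coe_mul_geometric_of_norm_lt_one hr]
    norm_num
  · rw [tsum_tsum_binQuarter_mul_geomHalf k' (f := fun n : ℕ => (n : ℝ) ^ 2) (by simp),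
      tsum_sq_mul_geometric_of_norm_lt_one hr]
    norm_num
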